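/- arXiv:2510.25029 — 8 statements merged into one kernel-verified Lean document; each statement's English description precedes it below -/
import Mathlib

section
/- Let η and η' be scales with η < η' (i.e. lim_ω η_n/η'_n = 0). Then for every sequence z : ℕ → ℂ, if lim_ω |z_n|^{η'_n} < ∞ then lim_ω |z_n|^{η_n} ≤ 1; and this containment is strict: the sequence w_n = exp(1/√(η_n η'_n)) satisfies lim_ω w_n^{η_n} = 1 (hence ≤ 1) while lim_ω w_n^{η'_n} = ∞. -/
open Filter

/-- The ω-limit of a sequence in the compact space `[0,∞]`; for an ultrafilter this
equals the `limsup` along the ultrafilter. -/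
noncomputable def limw (ω : Ultrafilter ℕ) (a : ℕ → ENNReal) : ENNReal :=
  Filter.limsup a (ω : Filter ℕ)

/-- `lim_ω |z_n|^{η_n}` viewed in `[0,∞]`. -/
noncomputable def limNorm (ω : Ultrafilter ℕ) (η : ℕ → ℝ) (z : ℕ → ℂ) : ENNReal :=
  limw ω (fun n => ENNReal.ofReal (‖z n‖ ^ η n))

/-- A scale is a sequence with values in `(0,1]`. -/
def IsScale (η : ℕ → ℝ) : Prop := ∀ n, 0 < η n ∧ η n ≤ 1

/-- `lim_ω η_n / η'_n` in `[0,∞]`. -/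
noncomputable def scaleRatio (ω : Ultrafilter ℕ) (η η' : ℕ → ℝ) : ENNReal :=
  limw ω (fun n => ENNReal.ofReal (η n / η' n))

/-- `η ≤ η'` iff `lim_ω η_n/η'_n < ∞`. -/
def ScaleLE (ω : Ultrafilter ℕ) (η η' : ℕ → ℝ) : Prop := scaleRatio ω η η' ≠ ⊤

/-- `η < η'` iff `lim_ω η_n/η'_n = 0`. -/
def ScaleLT (ω : Ultrafilter ℕ) (η η' : ℕ → ℝ) : Prop := scaleRatio ω η η' = 0

/-- A scale is non-trivial if `lim_ω ε_n = 0`. -/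
def NontrivialScale (ω : Ultrafilter ℕ) (ε : ℕ → ℝ) : Prop :=
  limw ω (fun n => ENNReal.ofReal (ε n)) = 0

/-- Two scales are equivalent if `C⁻¹ η_n ≤ η'_n ≤ C η_n` ω-almost surely for some `C > 1`. -/
def ScaleEquiv (ω : Ultrafilter ℕ) (η η' : ℕ → ℝ) : Prop :=
  ∃ C : ℝ, 1 < C ∧ {n | C⁻¹ * η n ≤ η' n ∧ η' n ≤ C * η n} ∈ ω

/-! Writing `|z|^η = (|z|^η')^(η/η')`, a bound `c` on `|z_n|^η'_n` gives `|z_n|^η_n ≤ c^(η_n/η'_n)`,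
which tends to `1` because `η/η' → 0` along `ω`. For `w_n = exp(1/√(η_n η'_n))` one computes
`w_n^η_n = exp √(η_n/η'_n) → 1` and `w_n^η'_n = exp √(η'_n/η_n) → ∞`. -/

open Topology

lemma limw_eq_of_tendsto {ω : Ultrafilter ℕ} {a : ℕ → ENNReal} {l : ENNReal}
    (h : Tendsto a ω (𝓝 l)) : limw ω a = l :=
  h.limsup_eq

lemma tendsto_nhds_zero_of_limw_ofReal_eq_zero {ω : Ultrafilter ℕ} {a : ℕ → ℝ}
    (ha : ∀ n, 0 ≤ a n) (h : limw ω (fun n => ENNReal.ofReal (a n)) = 0) :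
    Tendsto a ω (𝓝 0) := by
  have hofReal : Tendsto (fun n => ENNReal.ofReal (a n)) ω (𝓝 0) :=
    tendsto_of_liminf_eq_limsup (le_antisymm (h ▸ liminf_le_limsup) zero_le) h
  simpa [Function.comp_def, ENNReal.toReal_ofReal (ha _)] using
    (ENNReal.tendsto_toReal ENNReal.zero_ne_top).comp hofReal

namespace ScaleLT

variable {ω : Ultrafilter ℕ} {η η' : ℕ → ℝ}

lemma tendsto_div_nhds_zero (hη : IsScale η) (hη' : IsScale η') (h : ScaleLT ω η η') :
    Tendsto (fun n => η n / η' n) ω (𝓝 0) :=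
  tendsto_nhds_zero_of_limw_ofReal_eq_zero (fun n => div_nonneg (hη n).1.le (hη' n).1.le) h

lemma tendsto_div_atTop (hη : IsScale η) (hη' : IsScale η') (h : ScaleLT ω η η') :
    Tendsto (fun n => η' n / η n) ω atTop := by
  have hpos : Tendsto (fun n => η n / η' n) ω (𝓝[>] 0) :=
    tendsto_nhdsWithin_of_tendsto_nhds_of_eventually_within _ (h.tendsto_div_nhds_zero hη hη')
      (Eventually.of_forall fun n => div_pos (hη n).1 (hη' n).1)
  simpa only [Pi.inv_def, inv_div] using hpos.inv_tendsto_nhdsGT_zero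

end ScaleLT

lemma Real.rpow_le_rpow_div_of_rpow_le {x p q c : ℝ} (hx : 0 ≤ x) (hq : q ≠ 0)
    (hpq : 0 ≤ p / q) (h : x ^ q ≤ c) : x ^ p ≤ c ^ (p / q) :=
  calc x ^ p = (x ^ q) ^ (p / q) := by rw [← Real.rpow_mul hx, mul_div_cancel₀ p hq]
    _ ≤ c ^ (p / q) := Real.rpow_le_rpow (Real.rpow_nonneg hx q) h hpq

lemma limNorm_le_one_of_limNorm_ne_top {ω : Ultrafilter ℕ} {p q : ℕ → ℝ} {z : ℕ → ℂ}
    (hq : ∀ n, q n ≠ 0) (hpq : ∀ n, 0 ≤ p n / q n) (hlim : Tendsto (fun n => p n / q n) ω (𝓝 0))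
    (hz : limNorm ω q z ≠ ⊤) : limNorm ω p z ≤ 1 := by
  obtain ⟨c, hzc, -⟩ := ENNReal.lt_iff_exists_nnreal_btwn.1 hz.lt_top
  have hc : (c : ℝ) ≠ 0 := NNReal.coe_ne_zero.2 (ENNReal.coe_ne_zero.1 (pos_of_gt hzc).ne')
  have hbound : ∀ᶠ n in (ω : Filter ℕ), ‖z n‖ ^ q n ≤ c := by
    filter_upwards [eventually_lt_of_limsup_lt hzc] with n hn
    exact ((ENNReal.ofReal_lt_coe_iff (Real.rpow_nonneg (norm_nonneg _) _)).1 hn).le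
  have hrpow : Tendsto (fun n => ENNReal.ofReal ((c : ℝ) ^ (p n / q n))) ω (𝓝 1) := by
    simpa using ENNReal.tendsto_ofReal (tendsto_const_nhds.rpow hlim (Or.inl hc))
  calc limNorm ω p z
      ≤ limw ω (fun n => ENNReal.ofReal ((c : ℝ) ^ (p n / q n))) := by
        refine limsup_le_limsup ?_
        filter_upwards [hbound] with n hn
        exact ENNReal.ofReal_le_ofReal
          (Real.rpow_le_rpow_div_of_rpow_le (norm_nonneg _) (hq n) (hpq n) hn)
    _ = 1 := limw_eq_of_tendsto hrpow

lemma Real.one_div_sqrt_mul_mul_left {a b : ℝ} (ha : 0 ≤ a) (hb : 0 ≤ b) :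
    1 / √(a * b) * a = √(a / b) := by
  rw [Real.sqrt_mul ha, Real.sqrt_div' a hb, one_div_mul_eq_div, ← div_div, Real.div_sqrt]

lemma limNorm_ofReal_exp {ω : Ultrafilter ℕ} (p x : ℕ → ℝ) :
    limNorm ω p (fun n => (Real.exp (x n) : ℂ)) =
      limw ω (fun n => ENNReal.ofReal (Real.exp (x n * p n))) := by
  simp only [limNorm, Complex.norm_real, Real.norm_of_nonneg (Real.exp_pos _).le, Real.exp_mul]

lemma limw_ofReal_exp_sqrt_of_tendsto_zero {ω : Ultrafilter ℕ} {r : ℕ → ℝ}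
    (h : Tendsto r ω (𝓝 0)) : limw ω (fun n => ENNReal.ofReal (Real.exp √(r n))) = 1 :=
  limw_eq_of_tendsto <| by
    simpa using ENNReal.tendsto_ofReal (Real.continuous_exp.tendsto _ |>.comp
      (Real.continuous_sqrt.tendsto _ |>.comp h))

lemma limw_ofReal_exp_sqrt_of_tendsto_atTop {ω : Ultrafilter ℕ} {r : ℕ → ℝ}
    (h : Tendsto r ω atTop) : limw ω (fun n => ENNReal.ofReal (Real.exp √(r n))) = ⊤ :=
  limw_eq_of_tendsto <|
    ENNReal.tendsto_ofReal_atTop.comp (Real.tendsto_exp_atTop.comp (Real.tendsto_sqrt_atTop.comp h))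

theorem stmt3_general (ω : Ultrafilter ℕ)
    (η η' : ℕ → ℝ) (hη : IsScale η) (hη' : IsScale η') (hlt : ScaleLT ω η η') :
    (∀ z : ℕ → ℂ, limNorm ω η' z ≠ ⊤ → limNorm ω η z ≤ 1) ∧
    limNorm ω η (fun n => (Real.exp (1 / Real.sqrt (η n * η' n)) : ℂ)) = 1 ∧
    limNorm ω η' (fun n => (Real.exp (1 / Real.sqrt (η n * η' n)) : ℂ)) = ⊤ := by
  have hη0 n : 0 ≤ η n := (hη n).1.le
  have hη'0 n : 0 ≤ η' n := (hη' n).1.le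
  have hratio := hlt.tendsto_div_nhds_zero hη hη'
  refine ⟨fun z hz => limNorm_le_one_of_limNorm_ne_top (fun n => (hη' n).1.ne')
    (fun n => div_nonneg (hη0 n) (hη'0 n)) hratio hz, ?_, ?_⟩
  · simp_rw [limNorm_ofReal_exp, Real.one_div_sqrt_mul_mul_left (hη0 _) (hη'0 _)]
    exact limw_ofReal_exp_sqrt_of_tendsto_zero hratio
  · simp_rw [limNorm_ofReal_exp, mul_comm (η _) (η' _),
      Real.one_div_sqrt_mul_mul_left (hη'0 _) (hη0 _)]
    exact limw_ofReal_exp_sqrt_of_tendsto_atTop (hlt.tendsto_div_atTop hη hη')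

/-- if `η < η'` then `lim_ω |z_n|^{η'_n} < ∞` implies `lim_ω |z_n|^{η_n} ≤ 1`,
and the containment is strict: `w_n = exp(1/√(η_n η'_n))` satisfies `lim_ω w_n^{η_n} = 1`
while `lim_ω w_n^{η'_n} = ∞`. -/
theorem stmt3 (ω : Ultrafilter ℕ) (hω : ∀ s : Set ℕ, sᶜ.Finite → s ∈ ω)
    (η η' : ℕ → ℝ) (hη : IsScale η) (hη' : IsScale η') (hlt : ScaleLT ω η η') :
    (∀ z : ℕ → ℂ, limNorm ω η' z ≠ ⊤ → limNorm ω η z ≤ 1) ∧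
    limNorm ω η (fun n => (Real.exp (1 / Real.sqrt (η n * η' n)) : ℂ)) = 1 ∧
    limNorm ω η' (fun n => (Real.exp (1 / Real.sqrt (η n * η' n)) : ℂ)) = ⊤ :=
  stmt3_general ω η η' hη hη' hlt
end

section
/- Let η be a non-trivial scale (lim_ω η_n = 0). Then for every sequence z : ℕ → ℂ, one has lim_ω |z_n|^{η_n} ≤ 1 if and only if there exists a non-trivial scale η' with η < η' (i.e. lim_ω η_n/η'_n = 0) such that lim_ω |z_n|^{η'_n} ≤ 1. -/
open Filter

/-!
With `a_n = log⁺ |z_n|`, the condition `lim_ω |z_n|^{t_n} ≤ 1` is equivalent to `t_n a_n → 0`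
along `ω`, so the claim is about real sequences tending to `0`. If `η a → 0`, then
`η' = η / max (√η) (√(η a))` works: `η / η' = max (√η) (√(η a)) → 0`, `η' ≤ √η → 0` and
`η' a ≤ √(η a) → 0`. Conversely `η a = (η / η') (η' a) → 0`.
-/

open Topology Real

lemma limw_ofReal_le_ofReal_iff {ω : Ultrafilter ℕ} {a : ℕ → ℝ} {x : ℝ} (hx : 0 ≤ x) :
    limw ω (fun n => ENNReal.ofReal (a n)) ≤ ENNReal.ofReal x ↔
      ∀ c, x < c → ∀ᶠ n in (ω : Filter ℕ), a n < c := by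
  rw [limw, limsup_le_iff]
  constructor
  · intro h c hxc
    have hc : 0 < c := hx.trans_lt hxc
    filter_upwards [h _ ((ENNReal.ofReal_lt_ofReal_iff hc).2 hxc)] with n hn
    exact (ENNReal.ofReal_lt_ofReal_iff hc).1 hn
  · intro h y hy
    obtain ⟨r, -, hxr, hry⟩ := ENNReal.lt_iff_exists_real_btwn.1 hy
    have hxr : x < r := (ENNReal.ofReal_lt_ofReal_iff_of_nonneg hx).1 hxr
    filter_upwards [h r hxr] with n hn
    exact ((ENNReal.ofReal_lt_ofReal_iff (hx.trans_lt hxr)).2 hn).trans hry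

lemma tendsto_nhds_zero_iff_of_nonneg {α : Type*} {l : Filter α} {f : α → ℝ}
    (hf : ∀ x, 0 ≤ f x) :
    Tendsto f l (𝓝 0) ↔ ∀ ε, 0 < ε → ∀ᶠ x in l, f x < ε := by
  rw [tendsto_order]
  exact ⟨fun h => h.2, fun h => ⟨fun c hc => .of_forall fun x => hc.trans_le (hf x), h⟩⟩

lemma limw_ofReal_eq_zero_iff_tendsto {ω : Ultrafilter ℕ} {a : ℕ → ℝ} (ha : ∀ n, 0 ≤ a n) :
    limw ω (fun n => ENNReal.ofReal (a n)) = 0 ↔ Tendsto a ω (𝓝 0) := by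
  rw [tendsto_nhds_zero_iff_of_nonneg ha, ← nonpos_iff_eq_zero, ← ENNReal.ofReal_zero,
    limw_ofReal_le_ofReal_iff le_rfl]

lemma rpow_lt_exp_iff_mul_posLog_lt {b t ε : ℝ} (hb : 0 ≤ b) (ht : 0 ≤ t) (hε : 0 < ε) :
    b ^ t < exp ε ↔ t * log⁺ b < ε := by
  rcases le_or_gt b 1 with hb1 | hb1
  · have hlog : log⁺ b = 0 := (posLog_eq_zero_iff b).2 (by rwa [abs_of_nonneg hb])
    rw [hlog, mul_zero]
    exact iff_of_true ((rpow_le_one hb hb1 ht).trans_lt (one_lt_exp_iff.2 hε)) hε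
  · rw [posLog_eq_log (by rw [abs_of_nonneg hb]; exact hb1.le),
      rpow_def_of_pos (zero_lt_one.trans hb1), exp_lt_exp, mul_comm]

lemma limNorm_le_one_iff_tendsto {ω : Ultrafilter ℕ} {t : ℕ → ℝ} (ht : ∀ n, 0 ≤ t n)
    (z : ℕ → ℂ) :
    limNorm ω t z ≤ 1 ↔ Tendsto (fun n => t n * log⁺ ‖z n‖) ω (𝓝 0) := by
  rw [limNorm, ← ENNReal.ofReal_one, limw_ofReal_le_ofReal_iff zero_le_one,
    tendsto_nhds_zero_iff_of_nonneg fun n => mul_nonneg (ht n) posLog_nonneg]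
  constructor
  · intro h ε hε
    filter_upwards [h _ (one_lt_exp_iff.2 hε)] with n hn
    exact (rpow_lt_exp_iff_mul_posLog_lt (norm_nonneg _) (ht n) hε).1 hn
  · intro h c hc
    filter_upwards [h _ (log_pos hc)] with n hn
    rw [← exp_log (zero_lt_one.trans hc)]
    exact (rpow_lt_exp_iff_mul_posLog_lt (norm_nonneg _) (ht n) (log_pos hc)).2 hn

lemma IsScale.nonneg {η : ℕ → ℝ} (hη : IsScale η) (n : ℕ) : 0 ≤ η n := (hη n).1.le

lemma nontrivialScale_iff_tendsto {ω : Ultrafilter ℕ} {η : ℕ → ℝ} (hη : IsScale η) :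
    NontrivialScale ω η ↔ Tendsto η ω (𝓝 0) :=
  limw_ofReal_eq_zero_iff_tendsto hη.nonneg

lemma scaleLT_iff_tendsto {ω : Ultrafilter ℕ} {η η' : ℕ → ℝ} (hη : IsScale η)
    (hη' : IsScale η') :
    ScaleLT ω η η' ↔ Tendsto (fun n => η n / η' n) ω (𝓝 0) :=
  limw_ofReal_eq_zero_iff_tendsto fun n => div_nonneg (hη.nonneg n) (hη'.nonneg n)

lemma exists_scale_gt_of_tendsto_mul {l : Filter ℕ} {η a : ℕ → ℝ} (hη : IsScale η)
    (ha : ∀ n, 0 ≤ a n) (hη0 : Tendsto η l (𝓝 0)) (hηa : Tendsto (fun n => η n * a n) l (𝓝 0)) :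
    ∃ η' : ℕ → ℝ, IsScale η' ∧ Tendsto η' l (𝓝 0) ∧
      Tendsto (fun n => η n / η' n) l (𝓝 0) ∧ Tendsto (fun n => η' n * a n) l (𝓝 0) := by
  set D : ℕ → ℝ := fun n => max √(η n) √(η n * a n)
  have hsqrt_pos : ∀ n, 0 < √(η n) := fun n => sqrt_pos.2 (hη n).1
  have hD : ∀ n, 0 < D n := fun n => (hsqrt_pos n).trans_le (le_max_left _ _)
  have hle_sqrt : ∀ n, η n / D n ≤ √(η n) := fun n =>
    (div_le_div_of_nonneg_left (hη n).1.le (hsqrt_pos n) (le_max_left _ _)).trans_eq div_sqrt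
  have hsqrt0 : Tendsto (fun n => √(η n)) l (𝓝 0) := by simpa using hη0.sqrt
  have hsqrta0 : Tendsto (fun n => √(η n * a n)) l (𝓝 0) := by simpa using hηa.sqrt
  refine ⟨fun n => η n / D n, fun n => ⟨div_pos (hη n).1 (hD n), (hle_sqrt n).trans
    (sqrt_le_one.2 (hη n).2)⟩, ?_, ?_, ?_⟩
  · exact tendsto_of_tendsto_of_tendsto_of_le_of_le tendsto_const_nhds hsqrt0
      (fun n => (div_pos (hη n).1 (hD n)).le) hle_sqrt
  · simp only [div_div_cancel₀ (hη _).1.ne']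
    simpa using hsqrt0.max hsqrta0
  · refine tendsto_of_tendsto_of_tendsto_of_le_of_le tendsto_const_nhds hsqrta0
      (fun n => mul_nonneg (div_pos (hη n).1 (hD n)).le (ha n)) fun n => ?_
    have hηa : 0 ≤ η n * a n := mul_nonneg (hη n).1.le (ha n)
    rw [div_mul_eq_mul_div, div_le_iff₀ (hD n)]
    calc η n * a n = √(η n * a n) * √(η n * a n) := (mul_self_sqrt hηa).symm
      _ ≤ √(η n * a n) * D n := mul_le_mul_of_nonneg_left (le_max_right _ _) (sqrt_nonneg _)

theorem stmt4_general (ω : Ultrafilter ℕ)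
    (η : ℕ → ℝ) (hη : IsScale η) (hηnt : NontrivialScale ω η) (z : ℕ → ℂ) :
    limNorm ω η z ≤ 1 ↔
      ∃ η' : ℕ → ℝ, IsScale η' ∧ NontrivialScale ω η' ∧ ScaleLT ω η η' ∧
        limNorm ω η' z ≤ 1 := by
  rw [limNorm_le_one_iff_tendsto hη.nonneg]
  constructor
  · intro h
    obtain ⟨η', hη', hη'0, hratio, hη'a⟩ := exists_scale_gt_of_tendsto_mul hη
      (fun _ => posLog_nonneg) ((nontrivialScale_iff_tendsto hη).1 hηnt) h
    exact ⟨η', hη', (nontrivialScale_iff_tendsto hη').2 hη'0,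
      (scaleLT_iff_tendsto hη hη').2 hratio, (limNorm_le_one_iff_tendsto hη'.nonneg z).2 hη'a⟩
  · rintro ⟨η', hη', -, hlt, hη'z⟩
    rw [scaleLT_iff_tendsto hη hη'] at hlt
    rw [limNorm_le_one_iff_tendsto hη'.nonneg] at hη'z
    have hprod := hlt.mul hη'z
    rw [zero_mul] at hprod
    exact hprod.congr fun n => by field_simp [(hη' n).1.ne']

/-- STATEMENT 4: for a non-trivial scale `η`, one has `lim_ω |z_n|^{η_n} ≤ 1` iff there is a
non-trivial scale `η' > η` with `lim_ω |z_n|^{η'_n} ≤ 1`. -/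
theorem stmt4 (ω : Ultrafilter ℕ) (hω : ∀ s : Set ℕ, sᶜ.Finite → s ∈ ω)
    (η : ℕ → ℝ) (hη : IsScale η) (hηnt : NontrivialScale ω η) (z : ℕ → ℂ) :
    limNorm ω η z ≤ 1 ↔
      ∃ η' : ℕ → ℝ, IsScale η' ∧ NontrivialScale ω η' ∧ ScaleLT ω η η' ∧
        limNorm ω η' z ≤ 1 :=
  stmt4_general ω η hη hηnt z
end

section
/- Let ε and η be non-trivial scales with ε < η (i.e. lim_ω ε_n/η_n = 0). Then for every sequence z : ℕ → ℂ, one has lim_ω |z_n|^{η_n} < ∞ if and only if for every scale η' satisfying ε ≤ η' and η' < η one has lim_ω |z_n|^{η'_n} ≤ 1. -/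
/-!
Write `a n = ‖z n‖ ^ η n`, so that `‖z n‖ ^ η' n = a n ^ (η' n / η n)`. Since `ω` is an ultrafilter,
`ω`-limits in `[0, ∞]` are genuine limits, so either `a` is `ω`-eventually bounded by some `M` or
`a → ∞` along `ω`. In the first case, for `η' < η` the exponents tend to `0`, hence
`‖z n‖ ^ η' n ≤ M ^ (η' n / η n) → 1`. In the second case the scale
`η' = max ε (η / √(log a))` satisfies `ε ≤ η' < η`, yet
`‖z n‖ ^ η' n ≥ a n ^ (√(log (a n)))⁻¹ = exp √(log (a n)) → ∞`.
-/

open Filter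

open Topology Real

section UltrafilterLimit

variable {ω : Ultrafilter ℕ}

theorem tendsto_limw (ω : Ultrafilter ℕ) (a : ℕ → ENNReal) : Tendsto a ω (𝓝 (limw ω a)) := by
  have h : Tendsto a ω (𝓝 (ω.map a).lim) := (ω.map a).le_nhds_lim
  rwa [limw, h.limsup_eq]

theorem limw_eq_iff_tendsto {a : ℕ → ENNReal} {x : ENNReal} :
    limw ω a = x ↔ Tendsto a ω (𝓝 x) :=
  ⟨fun h => h ▸ tendsto_limw ω a, Tendsto.limsup_eq⟩

theorem limw_ofReal_eq_top_iff {a : ℕ → ℝ} :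
    limw ω (fun n => ENNReal.ofReal (a n)) = ⊤ ↔ Tendsto a ω atTop := by
  rw [limw_eq_iff_tendsto, ENNReal.tendsto_ofReal_nhds_top]

theorem limw_ofReal_eq_zero_iff {a : ℕ → ℝ} (ha : ∀ n, 0 ≤ a n) :
    limw ω (fun n => ENNReal.ofReal (a n)) = 0 ↔ Tendsto a ω (𝓝 0) := by
  rw [limw_eq_iff_tendsto]
  refine ⟨fun h => ?_, fun h => by simpa using ENNReal.tendsto_ofReal h⟩
  have h' := (ENNReal.tendsto_toReal ENNReal.zero_ne_top).comp h
  simpa [Function.comp_def, ENNReal.toReal_ofReal (ha _)] using h'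

theorem exists_eventually_le_of_limw_ne_top {a : ℕ → ℝ}
    (h : limw ω (fun n => ENNReal.ofReal (a n)) ≠ ⊤) : ∃ M, ∀ᶠ n in ω, a n ≤ M := by
  rw [ne_eq, limw_ofReal_eq_top_iff, tendsto_atTop, not_forall] at h
  obtain ⟨M, hM⟩ := h
  exact ⟨M, (Ultrafilter.eventually_not.2 hM).mono fun n hn => (not_le.1 hn).le⟩

end UltrafilterLimit

section Scales

variable {ω : Ultrafilter ℕ} {ε η : ℕ → ℝ}

theorem scaleLT_iff_tendsto_s2 {u v : ℕ → ℝ} (hu : ∀ n, 0 ≤ u n) (hv : ∀ n, 0 ≤ v n) :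
    ScaleLT ω u v ↔ Tendsto (fun n => u n / v n) ω (𝓝 0) :=
  limw_ofReal_eq_zero_iff fun n => div_nonneg (hu n) (hv n)

theorem isScale_max_div {s : ℕ → ℝ} (hε : IsScale ε) (hη : IsScale η) (hs : ∀ n, 1 ≤ s n) :
    IsScale fun n => max (ε n) (η n / s n) := fun n =>
  ⟨lt_max_of_lt_left (hε n).1,
    max_le (hε n).2 ((div_le_self (hη n).1.le (hs n)).trans (hη n).2)⟩

theorem scaleLE_max_left (w : ℕ → ℝ) (hε : ∀ n, 0 < ε n) :
    ScaleLE ω ε fun n => max (ε n) (w n) := by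
  rw [ScaleLE, scaleRatio, ne_eq, limw_ofReal_eq_top_iff]
  intro h
  obtain ⟨n, hn⟩ := (h.eventually_gt_atTop 1).exists
  exact hn.not_ge <| (div_le_one (lt_max_of_lt_left (hε n))).2 (le_max_left _ _)

theorem scaleLT_max_div {s : ℕ → ℝ} (hε : IsScale ε) (hη : IsScale η) (hs1 : ∀ n, 1 ≤ s n)
    (hlt : ScaleLT ω ε η) (hs : Tendsto s ω atTop) :
    ScaleLT ω (fun n => max (ε n) (η n / s n)) η := by
  have hη0 : ∀ n, 0 ≤ η n := fun n => (hη n).1.le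
  rw [scaleLT_iff_tendsto_s2 (fun n => (hε n).1.le) hη0] at hlt
  rw [scaleLT_iff_tendsto_s2 (fun n => (isScale_max_div hε hη hs1 n).1.le) hη0]
  have hratio : (fun n => max (ε n) (η n / s n) / η n) = fun n => max (ε n / η n) (s n)⁻¹ := by
    ext n
    rw [← max_div_div_right (hη0 n), div_div_cancel_left' (hη n).1.ne']
  simpa [hratio] using hlt.max (tendsto_inv_atTop_zero.comp hs)

end Scales

theorem rpow_eq_rpow_rpow_div {x t u : ℝ} (hx : 0 ≤ x) (ht : t ≠ 0) :
    x ^ u = (x ^ t) ^ (u / t) := by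
  rw [← Real.rpow_mul hx, mul_div_cancel₀ u ht]

theorem rpow_inv_sqrt_log {x : ℝ} (hx : 0 < x) : x ^ (√(log x))⁻¹ = exp √(log x) := by
  rw [Real.rpow_def_of_pos hx, ← div_eq_mul_inv, Real.div_sqrt]

theorem exp_sqrt_log_rpow_le {x t u : ℝ} (hx : 0 ≤ x) (ht : 0 ≤ t) (h1 : 1 < x ^ t)
    (hu : t / √(log (x ^ t)) ≤ u) : exp √(log (x ^ t)) ≤ x ^ u := by
  have hx1 : 1 ≤ x := by
    by_contra! hx1
    exact h1.not_ge (Real.rpow_le_one hx hx1.le ht)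
  calc exp √(log (x ^ t)) = (x ^ t) ^ (√(log (x ^ t)))⁻¹ := (rpow_inv_sqrt_log (by linarith)).symm
    _ = x ^ (t / √(log (x ^ t))) := by rw [← Real.rpow_mul hx, div_eq_mul_inv]
    _ ≤ x ^ u := Real.rpow_le_rpow_of_exponent_le hx1 hu

theorem limNorm_le_one_of_eventually_le {ω : Ultrafilter ℕ} {η η' : ℕ → ℝ} {z : ℕ → ℂ} {M : ℝ}
    (hη : ∀ n, 0 < η n) (hη' : ∀ n, 0 ≤ η' n) (hM : ∀ᶠ n in ω, ‖z n‖ ^ η n ≤ M)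
    (hratio : Tendsto (fun n => η' n / η n) ω (𝓝 0)) : limNorm ω η' z ≤ 1 := by
  set M' := max M 1
  have hbound : ∀ᶠ n in ω,
      ENNReal.ofReal (‖z n‖ ^ η' n) ≤ ENNReal.ofReal (M' ^ (η' n / η n)) := by
    filter_upwards [hM] with n hn
    rw [rpow_eq_rpow_rpow_div (norm_nonneg _) (hη n).ne']
    exact ENNReal.ofReal_le_ofReal <| Real.rpow_le_rpow (by positivity)
      (hn.trans (le_max_left _ _)) (div_nonneg (hη' n) (hη n).le)
  have hlim : Tendsto (fun n => ENNReal.ofReal (M' ^ (η' n / η n))) ω (𝓝 1) := by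
    have hM' : M' ≠ 0 := (zero_lt_one.trans_le (le_max_right M 1)).ne'
    simpa using ENNReal.tendsto_ofReal ((Real.continuousAt_const_rpow hM').tendsto.comp hratio)
  calc limNorm ω η' z ≤ limw ω (fun n => ENNReal.ofReal (M' ^ (η' n / η n))) :=
        limsup_le_limsup hbound
    _ = 1 := limw_eq_iff_tendsto.2 hlim

theorem exists_scale_limNorm_eq_top {ω : Ultrafilter ℕ} {ε η : ℕ → ℝ} {z : ℕ → ℂ}
    (hε : IsScale ε) (hη : IsScale η) (hlt : ScaleLT ω ε η) (hz : limNorm ω η z = ⊤) :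
    ∃ η', IsScale η' ∧ ScaleLE ω ε η' ∧ ScaleLT ω η' η ∧ limNorm ω η' z = ⊤ := by
  set a : ℕ → ℝ := fun n => ‖z n‖ ^ η n
  have ha : Tendsto a ω atTop := limw_ofReal_eq_top_iff.1 hz
  set s : ℕ → ℝ := fun n => √(log (max (a n) (exp 1)))
  have hs1 : ∀ n, 1 ≤ s n := fun n => Real.one_le_sqrt.2 <|
    (Real.le_log_iff_exp_le (by positivity)).2 (le_max_right _ _)
  have hs : Tendsto s ω atTop := Real.tendsto_sqrt_atTop.comp <|
    Real.tendsto_log_atTop.comp <| tendsto_atTop_mono (fun n => le_max_left _ _) ha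
  refine ⟨_, isScale_max_div hε hη hs1, scaleLE_max_left _ fun n => (hε n).1,
    scaleLT_max_div hε hη hs1 hlt hs, ?_⟩
  rw [limNorm, limw_ofReal_eq_top_iff]
  refine tendsto_atTop_mono' _ ?_ (Real.tendsto_exp_atTop.comp hs)
  filter_upwards [ha.eventually_ge_atTop (exp 1)] with n hn
  have hsn : s n = √(log (a n)) := by simp only [s, max_eq_left hn]
  simp only [Function.comp_apply, hsn]
  exact exp_sqrt_log_rpow_le (norm_nonneg _) (hη n).1.le
    ((one_lt_exp_iff.2 one_pos).trans_le hn) (hsn ▸ le_max_right _ _)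

theorem stmt5_general (ω : Ultrafilter ℕ)
    (ε η : ℕ → ℝ) (hε : IsScale ε) (hη : IsScale η)
    (hlt : ScaleLT ω ε η) (z : ℕ → ℂ) :
    limNorm ω η z ≠ ⊤ ↔
      ∀ η' : ℕ → ℝ, IsScale η' → ScaleLE ω ε η' → ScaleLT ω η' η →
        limNorm ω η' z ≤ 1 := by
  constructor
  · intro hz η' hη' _ hη'η
    obtain ⟨M, hM⟩ := exists_eventually_le_of_limw_ne_top hz
    exact limNorm_le_one_of_eventually_le (fun n => (hη n).1) (fun n => (hη' n).1.le) hM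
      ((scaleLT_iff_tendsto_s2 (fun n => (hη' n).1.le) fun n => (hη n).1.le).1 hη'η)
  · intro h hz
    obtain ⟨η', hη', hεη', hη'η, hz'⟩ := exists_scale_limNorm_eq_top hε hη hlt hz
    simpa [hz'] using h η' hη' hεη' hη'η

/-- for non-trivial scales `ε < η`, one has `lim_ω |z_n|^{η_n} < ∞` iff for every
scale `η'` with `ε ≤ η'` and `η' < η` one has `lim_ω |z_n|^{η'_n} ≤ 1`. -/
theorem stmt5 (ω : Ultrafilter ℕ) (hω : ∀ s : Set ℕ, sᶜ.Finite → s ∈ ω)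
    (ε η : ℕ → ℝ) (hε : IsScale ε) (hη : IsScale η)
    (hεnt : NontrivialScale ω ε) (hηnt : NontrivialScale ω η)
    (hlt : ScaleLT ω ε η) (z : ℕ → ℂ) :
    limNorm ω η z ≠ ⊤ ↔
      ∀ η' : ℕ → ℝ, IsScale η' → ScaleLE ω ε η' → ScaleLT ω η' η →
        limNorm ω η' z ≤ 1 :=
  stmt5_general ω ε η hε hη hlt z
end

section
/- Let ε and η be scales with ε < η (i.e. lim_ω ε_n/η_n = 0), and let z : ℕ → ℂ be a sequence. If lim_ω |z_n|^{η_n} < ∞, then lim_ω |z_n|^{ε_n} ≤ 1. -/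
/- `|z_n|^{η_n}` is bounded by some `M ≥ 1` for ω-almost every `n`. Given `δ > 0`,
`ε_n / η_n < δ` for ω-almost every `n`, and then
`|z_n|^{ε_n} = (|z_n|^{η_n})^{ε_n/η_n} ≤ M^δ` whenever `|z_n| > 1` (otherwise `|z_n|^{ε_n} ≤ 1`).
Hence `lim_ω |z_n|^{ε_n} ≤ M^δ` for every `δ > 0`, and `M^δ → 1` as `δ → 0`. -/

open Filter Topology

lemma Real.rpow_le_rpow_of_rpow_le {a M e h δ : ℝ} (ha : 0 ≤ a) (he : 0 ≤ e) (hh : 0 < h)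
    (hM : 1 ≤ M) (haM : a ^ h ≤ M) (hδ : e / h ≤ δ) : a ^ e ≤ M ^ δ := by
  rcases le_or_gt a 1 with ha1 | ha1
  · exact (Real.rpow_le_one ha ha1 he).trans
      (Real.one_le_rpow hM ((div_nonneg he hh.le).trans hδ))
  · calc a ^ e = (a ^ h) ^ (e / h) := by rw [← Real.rpow_mul ha, mul_div_cancel₀ e hh.ne']
      _ ≤ M ^ (e / h) := Real.rpow_le_rpow (by positivity) haM (by positivity)
      _ ≤ M ^ δ := Real.rpow_le_rpow_of_exponent_le hM hδ

section LimsupOfReal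

variable {ι : Type*} {f : Filter ι} {a : ι → ℝ}

lemma eventually_lt_of_limsup_ofReal_lt {r : ℝ}
    (h : limsup (fun i => ENNReal.ofReal (a i)) f < ENNReal.ofReal r) : ∀ᶠ i in f, a i < r := by
  filter_upwards [eventually_lt_of_limsup_lt h] with i hi
  exact (ENNReal.ofReal_lt_ofReal_iff'.mp hi).1

lemma exists_one_le_eventually_le_of_limsup_ofReal_ne_top
    (h : limsup (fun i => ENNReal.ofReal (a i)) f ≠ ⊤) : ∃ M, 1 ≤ M ∧ ∀ᶠ i in f, a i ≤ M := by
  obtain ⟨r, -, hr, -⟩ := ENNReal.lt_iff_exists_real_btwn.mp h.lt_top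
  refine ⟨max r 1, le_max_right _ _, ?_⟩
  filter_upwards [eventually_lt_of_limsup_ofReal_lt hr] with i hi
  exact hi.le.trans (le_max_left _ _)

end LimsupOfReal

lemma tendsto_ofReal_rpow_nhdsGT_zero {M : ℝ} (hM : 0 < M) :
    Tendsto (fun δ : ℝ => ENNReal.ofReal (M ^ δ)) (𝓝[>] 0) (𝓝 1) := by
  have hcont : ContinuousAt (fun δ : ℝ => ENNReal.ofReal (M ^ δ)) 0 :=
    ENNReal.continuous_ofReal.continuousAt.comp (Real.continuousAt_const_rpow hM.ne')
  simpa using hcont.tendsto.mono_left nhdsWithin_le_nhds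

theorem stmt6_general (ω : Ultrafilter ℕ)
    (ε η : ℕ → ℝ) (hε : IsScale ε) (hη : IsScale η)
    (hlt : ScaleLT ω ε η) (z : ℕ → ℂ) (hz : limNorm ω η z ≠ ⊤) :
    limNorm ω ε z ≤ 1 := by
  obtain ⟨M, hM, hbound⟩ := exists_one_le_eventually_le_of_limsup_ofReal_ne_top hz
  have hle_rpow : ∀ δ : ℝ, 0 < δ → limNorm ω ε z ≤ ENNReal.ofReal (M ^ δ) := by
    intro δ hδ
    have hratio : ∀ᶠ n in (ω : Filter ℕ), ε n / η n < δ := by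
      have hlim : limsup (fun n => ENNReal.ofReal (ε n / η n)) (ω : Filter ℕ) = 0 := hlt
      exact eventually_lt_of_limsup_ofReal_lt (hlim ▸ ENNReal.ofReal_pos.mpr hδ)
    refine limsup_le_of_le (by isBoundedDefault) ?_
    filter_upwards [hbound, hratio] with n hzn hn
    exact ENNReal.ofReal_le_ofReal <| Real.rpow_le_rpow_of_rpow_le (norm_nonneg _)
      (hε n).1.le (hη n).1 hM hzn hn.le
  exact ge_of_tendsto (tendsto_ofReal_rpow_nhdsGT_zero (by linarith))
    (eventually_nhdsWithin_of_forall hle_rpow)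

/-- STATEMENT 6: if `ε < η` and `lim_ω |z_n|^{η_n} < ∞`, then `lim_ω |z_n|^{ε_n} ≤ 1`. -/
theorem stmt6 (ω : Ultrafilter ℕ) (hω : ∀ s : Set ℕ, sᶜ.Finite → s ∈ ω)
    (ε η : ℕ → ℝ) (hε : IsScale ε) (hη : IsScale η)
    (hlt : ScaleLT ω ε η) (z : ℕ → ℂ) (hz : limNorm ω η z ≠ ⊤) :
    limNorm ω ε z ≤ 1 :=
  stmt6_general ω ε η hε hη hlt z hz
end

section
/- Let ε be a non-trivial scale (lim_ω ε_n = 0). Then for all sequences x, y : ℕ → ℂ one has the strong triangle inequality in the limit: lim_ω |x_n + y_n|^{ε_n} ≤ max( lim_ω |x_n|^{ε_n}, lim_ω |y_n|^{ε_n} ). In particular, the norm |z| = lim_ω |z_n|^{ε_n} on the complex Robinson field ℋ^ε(ω) is non-Archimedean. -/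
/-!
From `‖a + b‖ ≤ 2 max(‖a‖, ‖b‖)` one gets `‖x_n + y_n‖^{ε_n} ≤ 2^{ε_n} max(‖x_n‖^{ε_n}, ‖y_n‖^{ε_n})`.
Since `ε_n → 0` along `ω`, the factor `2^{ε_n}` tends to `1` and disappears in the limit, and the
ω-limit of a pointwise maximum is the maximum of the ω-limits.
-/

open Filter Topology

lemma norm_add_rpow_le_two_rpow_mul_max {E : Type*} [SeminormedAddGroup E] (a b : E) {p : ℝ}
    (hp : 0 ≤ p) : ‖a + b‖ ^ p ≤ 2 ^ p * max (‖a‖ ^ p) (‖b‖ ^ p) := by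
  have hmax : max ‖a‖ ‖b‖ ^ p = max (‖a‖ ^ p) (‖b‖ ^ p) := by
    rcases le_total ‖a‖ ‖b‖ with h | h
    · rw [max_eq_right h, max_eq_right (Real.rpow_le_rpow (norm_nonneg a) h hp)]
    · rw [max_eq_left h, max_eq_left (Real.rpow_le_rpow (norm_nonneg b) h hp)]
  calc ‖a + b‖ ^ p ≤ (2 * max ‖a‖ ‖b‖) ^ p := by
        refine Real.rpow_le_rpow (norm_nonneg _) ?_ hp
        linarith [norm_add_le a b, le_max_left ‖a‖ ‖b‖, le_max_right ‖a‖ ‖b‖]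
    _ = 2 ^ p * max (‖a‖ ^ p) (‖b‖ ^ p) := by
        rw [Real.mul_rpow zero_le_two (le_max_of_le_left (norm_nonneg a)), hmax]

lemma ENNReal.limsup_mul_le_of_tendsto_one {ι : Type*} {f : Filter ι} [f.NeBot]
    {u : ι → ENNReal} (hu : Tendsto u f (𝓝 1)) (v : ι → ENNReal) :
    limsup (u * v) f ≤ limsup v f := by
  have hlim : limsup u f = 1 := hu.limsup_eq
  calc limsup (u * v) f ≤ limsup u f * limsup v f :=
        ENNReal.limsup_mul_le' (by simp [hlim]) (by simp [hlim])
    _ = limsup v f := by rw [hlim, one_mul]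

namespace NontrivialScale

variable {ω : Ultrafilter ℕ} {ε : ℕ → ℝ}

lemma tendsto_zero (hε : ∀ n, 0 ≤ ε n) (h : NontrivialScale ω ε) :
    Tendsto ε (ω : Filter ℕ) (𝓝 0) := by
  have hofReal : Tendsto (fun n => ENNReal.ofReal (ε n)) (ω : Filter ℕ) (𝓝 0) :=
    tendsto_of_le_liminf_of_limsup_le bot_le h.le
  simpa [Function.comp_def, ENNReal.toReal_ofReal, hε] using
    (ENNReal.tendsto_toReal ENNReal.zero_ne_top).comp hofReal

lemma tendsto_two_rpow (hε : ∀ n, 0 ≤ ε n) (h : NontrivialScale ω ε) :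
    Tendsto (fun n => ENNReal.ofReal (2 ^ ε n)) (ω : Filter ℕ) (𝓝 1) := by
  have h2 := ((Real.continuous_const_rpow two_ne_zero).tendsto 0).comp (h.tendsto_zero hε)
  simpa [Function.comp_def] using (ENNReal.continuous_ofReal.tendsto _).comp h2

end NontrivialScale

theorem stmt8_general (ω : Ultrafilter ℕ)
    (ε : ℕ → ℝ) (hε : IsScale ε) (hεnt : NontrivialScale ω ε) (x y : ℕ → ℂ) :
    limNorm ω ε (fun n => x n + y n) ≤ max (limNorm ω ε x) (limNorm ω ε y) := by
  have hε0 : ∀ n, 0 ≤ ε n := fun n => (hε n).1.le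
  have hpointwise : ∀ n, ENNReal.ofReal (‖x n + y n‖ ^ ε n) ≤ ENNReal.ofReal (2 ^ ε n) *
      max (ENNReal.ofReal (‖x n‖ ^ ε n)) (ENNReal.ofReal (‖y n‖ ^ ε n)) := fun n => by
    rw [← ENNReal.ofReal_max, ← ENNReal.ofReal_mul (by positivity)]
    exact ENNReal.ofReal_le_ofReal (norm_add_rpow_le_two_rpow_mul_max _ _ (hε0 n))
  calc limNorm ω ε (fun n => x n + y n)
      ≤ limw ω (fun n => ENNReal.ofReal (2 ^ ε n) *
          max (ENNReal.ofReal (‖x n‖ ^ ε n)) (ENNReal.ofReal (‖y n‖ ^ ε n))) :=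
        limsup_le_limsup (Eventually.of_forall hpointwise)
    _ ≤ limw ω (fun n => max (ENNReal.ofReal (‖x n‖ ^ ε n)) (ENNReal.ofReal (‖y n‖ ^ ε n))) :=
        ENNReal.limsup_mul_le_of_tendsto_one (hεnt.tendsto_two_rpow hε0) _
    _ = max (limNorm ω ε x) (limNorm ω ε y) := limsup_max

/-- STATEMENT 8: for a non-trivial scale `ε`, the strong triangle inequality holds in the
limit: `lim_ω |x_n+y_n|^{ε_n} ≤ max(lim_ω |x_n|^{ε_n}, lim_ω |y_n|^{ε_n})`; in particular the
norm of the complex Robinson field `ℋ^ε(ω)` is non-Archimedean. -/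
theorem stmt8 (ω : Ultrafilter ℕ) (hω : ∀ s : Set ℕ, sᶜ.Finite → s ∈ ω)
    (ε : ℕ → ℝ) (hε : IsScale ε) (hεnt : NontrivialScale ω ε) (x y : ℕ → ℂ) :
    limNorm ω ε (fun n => x n + y n) ≤ max (limNorm ω ε x) (limNorm ω ε y) :=
  stmt8_general ω ε hε hεnt x y
end

section
/- For real numbers 0 < α < β, there is no scale ε satisfying simultaneously: lim_ω [1/((n+2)^α log(n+2))] / ε_n = 0 and lim_ω ε_n / [log(n+2)/(n+2)^α] = 0, and also lim_ω [1/((n+2)^β log(n+2))] / ε_n = 0 and lim_ω ε_n / [log(n+2)/(n+2)^β] = 0. In other words, the open intervals of scales I_α = ( (1/((n+2)^α log(n+2)))_n , ((log(n+2))/(n+2)^α)_n ), for α ∈ (0,∞), are pairwise disjoint; this yields an uncountable family of disjoint nonempty open sets in the order topology on scales, so the space of scales is not second countable. -/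
/-!
When `α < β`, `log x / x ^ β ≤ 1 / (x ^ α * log x)` eventually, because this is
`(log x) ^ 2 ≤ x ^ (β - α)` and logarithms grow slower than any power. So the upper end of `I_β`
eventually lies below the lower end of `I_α`, while a scale in both intervals would lie,
ω-almost surely, strictly above the latter and strictly below the former.
-/

open Filter

open Real

lemma eventually_lt_of_limw_div_eq_zero {ω : Ultrafilter ℕ} {x y : ℕ → ℝ}
    (hy : ∀ n, 0 < y n) (h : limw ω (fun n => ENNReal.ofReal (x n / y n)) = 0) :
    ∀ᶠ n in (ω : Filter ℕ), x n < y n := by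
  have hlt : ∀ᶠ n in (ω : Filter ℕ), ENNReal.ofReal (x n / y n) < 1 :=
    eventually_lt_of_limsup_lt (h.trans_lt zero_lt_one)
  filter_upwards [hlt] with n hn
  rwa [ENNReal.ofReal_lt_one, div_lt_one (hy n)] at hn

lemma le_atTop_of_cofinite_mem {ω : Ultrafilter ℕ} (hω : ∀ s : Set ℕ, sᶜ.Finite → s ∈ ω) :
    (ω : Filter ℕ) ≤ atTop := by
  rw [← Nat.cofinite_eq_atTop]
  exact fun s hs => hω s hs

lemma eventually_log_div_rpow_le_one_div_rpow_mul_log {α β : ℝ} (hαβ : α < β) :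
    ∀ᶠ x : ℝ in atTop, log x / x ^ β ≤ 1 / (x ^ α * log x) := by
  have hsq : ∀ᶠ x : ℝ in atTop, ‖log x ^ (2 : ℝ)‖ ≤ 1 * ‖x ^ (β - α)‖ :=
    (isLittleO_log_rpow_rpow_atTop 2 (sub_pos.2 hαβ)).bound one_pos
  filter_upwards [hsq, eventually_gt_atTop 1] with x hsq hx
  have hx0 : 0 < x := one_pos.trans hx
  have hlog : 0 < log x := log_pos hx
  have hxα : 0 < x ^ α := rpow_pos_of_pos hx0 α
  have hxβ : 0 < x ^ β := rpow_pos_of_pos hx0 β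
  rw [rpow_two, one_mul, Real.norm_of_nonneg (sq_nonneg _),
    Real.norm_of_nonneg (rpow_nonneg hx0.le _), rpow_sub hx0, le_div_iff₀ hxα] at hsq
  rw [div_le_div_iff₀ hxβ (mul_pos hxα hlog)]
  nlinarith

/-- for `0 < α < β`, no scale `ε` lies simultaneously in the open interval
`I_α = ( (1/((n+2)^α log(n+2)))_n , ((log(n+2))/(n+2)^α)_n )` and in `I_β`; i.e. these
intervals are pairwise disjoint (whence the space of scales is not second countable). -/
theorem stmt15 (ω : Ultrafilter ℕ) (hω : ∀ s : Set ℕ, sᶜ.Finite → s ∈ ω) :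
    ∀ α β : ℝ, 0 < α → α < β →
      ¬ ∃ ε : ℕ → ℝ, IsScale ε ∧
        limw ω (fun n => ENNReal.ofReal
          ((1 / (((n : ℝ) + 2) ^ α * Real.log ((n : ℝ) + 2))) / ε n)) = 0 ∧
        limw ω (fun n => ENNReal.ofReal
          (ε n / (Real.log ((n : ℝ) + 2) / ((n : ℝ) + 2) ^ α))) = 0 ∧
        limw ω (fun n => ENNReal.ofReal
          ((1 / (((n : ℝ) + 2) ^ β * Real.log ((n : ℝ) + 2))) / ε n)) = 0 ∧
        limw ω (fun n => ENNReal.ofReal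
          (ε n / (Real.log ((n : ℝ) + 2) / ((n : ℝ) + 2) ^ β))) = 0 := by
  rintro α β - hαβ ⟨ε, hε, hlowα, -, -, hupβ⟩
  have habove := eventually_lt_of_limw_div_eq_zero (fun n => (hε n).1) hlowα
  have hbelow := eventually_lt_of_limw_div_eq_zero
    (fun n => div_pos (log_pos (by linarith [n.cast_nonneg (α := ℝ)]))
      (rpow_pos_of_pos (by positivity) β)) hupβ
  have hcross : ∀ᶠ n : ℕ in (ω : Filter ℕ),
      log ((n : ℝ) + 2) / ((n : ℝ) + 2) ^ β ≤ 1 / (((n : ℝ) + 2) ^ α * log ((n : ℝ) + 2)) :=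
    le_atTop_of_cofinite_mem hω <|
      (tendsto_atTop_add_const_right _ 2 tendsto_natCast_atTop_atTop).eventually
        (eventually_log_div_rpow_le_one_div_rpow_mul_log hαβ)
  obtain ⟨n, habove, hbelow, hcross⟩ := (habove.and (hbelow.and hcross)).exists
  linarith
end

section
/- Let K be a field equipped with a multiplicative absolute value |·| : K → ℝ that is non-Archimedean, i.e. |x+y| ≤ max(|x|,|y|) for all x,y ∈ K. Let a ∈ K with |a| = e and set f : K → K, f(z) = z² + a. If p ∈ K is a periodic point of f, i.e. f^{[l]}(p) = p for some integer l ≥ 1, then |p| = e^{1/2}. -/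
set_option maxHeartbeats 1000000 in
/-- STATEMENT 17: over a field with a non-Archimedean multiplicative absolute value, every
periodic point of `f(z) = z² + a` with `|a| = e` has absolute value `e^{1/2}`. -/
theorem stmt17 (K : Type) [Field K] (v : K → ℝ)
    (hmul : ∀ x y : K, v (x * y) = v x * v y)
    (hzero : ∀ x : K, v x = 0 ↔ x = 0)
    (hna : ∀ x y : K, v (x + y) ≤ max (v x) (v y))
    (a : K) (ha : v a = Real.exp 1)
    (p : K) (l : ℕ) (hl : 1 ≤ l) (hp : (fun w : K => w ^ 2 + a)^[l] p = p) :
    v p = Real.exp (1 / 2) := by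
  set E := Real.exp 1 with hE
  set s := Real.exp (1 / 2) with hsdef
  have hE0 : 0 < E := Real.exp_pos 1
  have hE1 : 1 < E := by rw [hE]; exact Real.one_lt_exp_iff.mpr one_pos
  have hs0 : 0 < s := Real.exp_pos _
  have hsE : s * s = E := by rw [hsdef, hE, ← Real.exp_add]; norm_num
  have h0 : v 0 = 0 := (hzero 0).mpr rfl
  have h1 : v 1 = 1 := by
    have h := hmul 1 1
    rw [one_mul] at h
    have hne : v 1 ≠ 0 := fun hc => one_ne_zero ((hzero 1).mp hc)
    have hf : v 1 * (v 1 - 1) = 0 := by nlinarith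
    rcases mul_eq_zero.mp hf with h' | h'
    · exact absurd h' hne
    · linarith
  have hneg1 : v (-1) * v (-1) = 1 := by
    have h := hmul (-1) (-1)
    have e1 : ((-1 : K) * (-1)) = 1 := by ring
    rw [e1, h1] at h
    linarith
  have hneg1le : v (-1) ≤ 1 := by nlinarith [sq_nonneg (v (-1) - 1)]
  have hnegx : ∀ x : K, v (-x) = v (-1) * v x := by
    intro x
    have e1 : (-x : K) = (-1) * x := by ring
    rw [e1, hmul]
  have hposall : v (-1) = 1 → ∀ x : K, 0 ≤ v x := by
    intro hv x
    have h := hna x (-x)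
    have e1 : (x + -x : K) = 0 := by ring
    rw [e1, h0, hnegx, hv, one_mul, max_self] at h
    exact h
  have vsq : ∀ x : K, v (x ^ 2) = v x * v x := by
    intro x; rw [sq, hmul]
  -- Lemma A: if (v x)^2 > E then v (x^2 + a) = (v x)^2
  have lemA : ∀ x : K, E < v x * v x → v (x ^ 2 + a) = v x * v x := by
    intro x hx
    have hub : v (x ^ 2 + a) ≤ v x * v x := by
      have h := hna (x ^ 2) a
      rw [vsq, ha] at h
      exact h.trans (max_le le_rfl hx.le)
    have hlb : v x * v x ≤ v (x ^ 2 + a) := by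
      have e1 : (x ^ 2 : K) = (x ^ 2 + a) + (-a) := by ring
      have h := hna (x ^ 2 + a) (-a)
      rw [← e1, vsq] at h
      have hva : v (-a) ≤ E := by
        rw [hnegx, ha]; nlinarith
      rcases max_cases (v (x ^ 2 + a)) (v (-a)) with ⟨he, _⟩ | ⟨he, _⟩
      · rw [he] at h; exact h
      · rw [he] at h; linarith
    linarith
  -- Lemma B: if (v x)^2 < E then v (x^2 + a) = E
  have lemB : ∀ x : K, v x * v x < E → v (x ^ 2 + a) = E := by
    intro x hx
    have hub : v (x ^ 2 + a) ≤ E := by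
      have h := hna (x ^ 2) a
      rw [vsq, ha] at h
      exact h.trans (max_le hx.le le_rfl)
    have hlb : E ≤ v (x ^ 2 + a) := by
      have e1 : (a : K) = (x ^ 2 + a) + (-(x ^ 2)) := by ring
      have h := hna (x ^ 2 + a) (-(x ^ 2))
      rw [← e1, ha] at h
      have hvx2 : v (-(x ^ 2)) < E := by
        rw [hnegx, vsq]
        nlinarith [mul_self_nonneg (v x)]
      rcases max_cases (v (x ^ 2 + a)) (v (-(x ^ 2))) with ⟨he, _⟩ | ⟨he, _⟩
      · rw [he] at h; exact h
      · rw [he] at h; linarith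
    linarith
  -- Lemma C: if v x = -s then v (x^2 + a) = E
  have lemC : ∀ x : K, v x = -s → v (x ^ 2 + a) = E := by
    intro x hx
    have hvxneg : v x < 0 := by rw [hx]; linarith
    have hn1 : v (-1) = -1 := by
      have hne : v (-1) ≠ 1 := by
        intro hc
        exact absurd (hposall hc x) (not_le.mpr hvxneg)
      have hf : (v (-1) - 1) * (v (-1) + 1) = 0 := by nlinarith
      rcases mul_eq_zero.mp hf with h' | h'
      · exact absurd (by linarith) hne
      · linarith
    have hx2 : v x * v x = E := by rw [hx]; nlinarith
    have hub : v (x ^ 2 + a) ≤ E := by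
      have h := hna (x ^ 2) a
      rw [vsq, ha, hx2] at h
      exact h.trans (max_le le_rfl le_rfl)
    have hlb : E ≤ v (x ^ 2 + a) := by
      have e1 : (x ^ 2 : K) = (x ^ 2 + a) + (-a) := by ring
      have h := hna (x ^ 2 + a) (-a)
      rw [← e1, vsq, hx2] at h
      have hva : v (-a) = -E := by rw [hnegx, hn1, ha]; ring
      rcases max_cases (v (x ^ 2 + a)) (v (-a)) with ⟨he, _⟩ | ⟨he, _⟩
      · rw [he] at h; exact h
      · rw [he, hva] at h; linarith
    linarith
  -- iteration
  set F : K → K := fun w => w ^ 2 + a with hF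
  have hFval : ∀ x : K, F x = x ^ 2 + a := fun x => rfl
  have grow : ∀ k : ℕ, E ≤ v (F^[k] p) →
      E ≤ v (F^[k + 1] p) ∧ v (F^[k] p) ≤ v (F^[k + 1] p) := by
    intro k hk
    have heq : v (F^[k + 1] p) = v (F^[k] p) * v (F^[k] p) := by
      rw [Function.iterate_succ_apply', hFval]
      exact lemA _ (by nlinarith)
    constructor
    · rw [heq]; nlinarith
    · rw [heq]; nlinarith
  have mono : ∀ j : ℕ, E ≤ v (F^[1] p) →
      E ≤ v (F^[1 + j] p) ∧ v (F^[1] p) ≤ v (F^[1 + j] p) := by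
    intro j h1'
    induction j with
    | zero => exact ⟨h1', le_rfl⟩
    | succ n ih =>
      obtain ⟨ihE, ihle⟩ := ih
      obtain ⟨gE, gle⟩ := grow (1 + n) ihE
      exact ⟨gE, ihle.trans gle⟩
  have hF1 : F^[1] p = p ^ 2 + a := by rw [Function.iterate_one, hFval]
  by_contra hne
  have hkey : E ≤ v (F^[1] p) := by
    rw [hF1]
    rcases lt_trichotomy (v p * v p) E with h | h | h
    · rw [lemB p h]
    · have hf : (v p - s) * (v p + s) = 0 := by linear_combination h - hsE
      rcases mul_eq_zero.mp hf with h' | h'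
      · exact absurd (by linarith) hne
      · have hps : v p = -s := by linarith
        rw [lemC p hps]
    · rw [lemA p h]; linarith
  obtain ⟨hEl, h1l⟩ := mono (l - 1) hkey
  have hladd : 1 + (l - 1) = l := by omega
  rw [hladd, hp] at hEl h1l
  rw [hF1] at h1l
  have hEE : E * E ≤ v p * v p := mul_le_mul hEl hEl hE0.le (hE0.le.trans hEl)
  have h2 : E < v p * v p := lt_of_lt_of_le (by nlinarith [hE0, hE1]) hEE
  rw [lemA p h2] at h1l
  have hvp1 : 1 < v p := lt_of_lt_of_le hE1 hEl
  have : v p * 1 < v p * v p := by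
    exact mul_lt_mul_of_pos_left hvp1 (lt_trans one_pos hvp1)
  nlinarith [this, h1l]
end

section
/- Let K be a field equipped with a multiplicative absolute value |·| : K → ℝ that is non-Archimedean, i.e. |x+y| ≤ max(|x|,|y|) for all x,y ∈ K, and assume additionally that |2| = 1 in K. Let a ∈ K with |a| = e and set f : K → K, f(z) = z² + a. If p ∈ K satisfies f^{[l]}(p) = p for an integer l ≥ 1, then the multiplier of f at p along the cycle, namely ∏_{i=0}^{l-1} (2 · f^{[i]}(p)) (the product of the derivatives f'(z) = 2z along the orbit, which equals the derivative of f^{[l]} at p), has absolute value ∏_{i=0}^{l-1} |2 · f^{[i]}(p)| = e^{l/2}. -/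
/-- STATEMENT 18: over a field with a non-Archimedean multiplicative absolute value with
`|2| = 1`, if `p` is a periodic point of period dividing `l ≥ 1` of `f(z) = z² + a` with
`|a| = e`, then the multiplier `∏_{i=0}^{l-1} 2·f^[i](p)` of the cycle has absolute value
`∏_{i=0}^{l-1} |2·f^[i](p)| = e^{l/2}`. -/
theorem stmt18 (K : Type) [Field K] (v : K → ℝ)
    (hmul : ∀ x y : K, v (x * y) = v x * v y)
    (hzero : ∀ x : K, v x = 0 ↔ x = 0)
    (hna : ∀ x y : K, v (x + y) ≤ max (v x) (v y))
    (h2 : v 2 = 1)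
    (a : K) (ha : v a = Real.exp 1)
    (p : K) (l : ℕ) (hl : 1 ≤ l) (hp : (fun w : K => w ^ 2 + a)^[l] p = p) :
    ∏ i ∈ Finset.range l, v (2 * (fun w : K => w ^ 2 + a)^[i] p) =
      Real.exp ((l : ℝ) / 2) := by
  set g : K → K := fun w : K => w ^ 2 + a with hg
  set e : ℝ := Real.exp 1 with he
  have he1 : 1 < e := by
    have := Real.add_one_le_exp 1
    simp only [he]; linarith
  have he0 : 0 < e := by linarith
  -- basic values
  have hv0 : v 0 = 0 := (hzero 0).mpr rfl
  have hv1 : v 1 = 1 := by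
    have h : v 1 = v 1 * v 1 := by rw [← hmul, one_mul]
    have h0 : v 1 ≠ 0 := fun h' => one_ne_zero ((hzero 1).mp h')
    have : v 1 * v 1 = v 1 * 1 := by rw [mul_one]; exact h.symm
    have := mul_left_cancel₀ h0 this
    linarith
  have hneg1 : v (-1) * v (-1) = 1 := by
    have h : v ((-1 : K) * (-1)) = v (-1) * v (-1) := hmul (-1) (-1)
    rw [neg_mul_neg, one_mul, hv1] at h
    linarith
  have hneg1le : v (-1) ≤ 1 := by nlinarith [hneg1]
  have hvneg : ∀ x : K, v (-x) = v (-1) * v x := by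
    intro x
    rw [← hmul, neg_one_mul]
  have hvsq : ∀ x : K, v (x ^ 2) = v x ^ 2 := by
    intro x
    rw [sq x, hmul, sq]
  -- step estimates
  have step_le : ∀ x : K, v (x ^ 2 + a) ≤ max (v x ^ 2) e := by
    intro x
    have h := hna (x ^ 2) a
    rwa [hvsq, ha] at h
  have step_up : ∀ x : K, e < v x ^ 2 → v (x ^ 2 + a) = v x ^ 2 := by
    intro x hx
    have hle : v (x ^ 2 + a) ≤ v x ^ 2 := (step_le x).trans_eq (max_eq_left hx.le)
    have hge : v x ^ 2 ≤ max (v (x ^ 2 + a)) (v (-a)) := by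
      have h := hna (x ^ 2 + a) (-a)
      have hkey : v ((x ^ 2 + a) + (-a)) = v x ^ 2 := by
        rw [show (x ^ 2 + a) + (-a) = x ^ 2 from by ring, hvsq]
      rwa [hkey] at h
    have hna' : v (-a) ≤ e := by
      rw [hvneg, ha]
      nlinarith [hneg1le, he0]
    rcases max_cases (v (x ^ 2 + a)) (v (-a)) with ⟨h1, _⟩ | ⟨h1, _⟩
    · rw [h1] at hge; linarith
    · rw [h1] at hge; linarith
  have step_low : ∀ x : K, v x ^ 2 < e → v (x ^ 2 + a) = e := by
    intro x hx
    have hle : v (x ^ 2 + a) ≤ e := (step_le x).trans_eq (max_eq_right hx.le)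
    have hge : e ≤ max (v (x ^ 2 + a)) (v (-(x ^ 2))) := by
      have h := hna (x ^ 2 + a) (-(x ^ 2))
      have hkey : v ((x ^ 2 + a) + (-(x ^ 2))) = e := by
        rw [show (x ^ 2 + a) + (-(x ^ 2)) = a from by ring, ha]
      rwa [hkey] at h
    have hna' : v (-(x ^ 2)) < e := by
      rw [hvneg, hvsq]
      nlinarith [hneg1le, sq_nonneg (v x), hx]
    rcases max_cases (v (x ^ 2 + a)) (v (-(x ^ 2))) with ⟨h1, _⟩ | ⟨h1, _⟩
    · rw [h1] at hge; linarith
    · rw [h1] at hge; linarith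
  -- orbit values
  set s : ℕ → ℝ := fun i => v (g^[i] p) with hs
  have hsucc : ∀ i, s (i + 1) = v ((g^[i] p) ^ 2 + a) := by
    intro i
    simp only [hs, Function.iterate_succ_apply', hg]
  have sstep_up : ∀ i, e < s i ^ 2 → s (i + 1) = s i ^ 2 := by
    intro i h
    rw [hsucc i]
    exact step_up _ h
  have sstep_low : ∀ i, s i ^ 2 < e → s (i + 1) = e := by
    intro i h
    rw [hsucc i]
    exact step_low _ h
  have hper : ∀ i, s (i + l) = s i := by
    intro i
    show v (g^[i + l] p) = v (g^[i] p)
    rw [Function.iterate_add_apply, hp]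
  -- claim 1 : never above e
  have claim1 : ∀ i, s i ^ 2 ≤ e := by
    intro j
    by_contra hj
    push_neg at hj
    have key : ∀ k, e < s (j + k) ^ 2 ∧ s (j + k) < s (j + k + 1) := by
      intro k
      induction k with
      | zero =>
        refine ⟨by simpa using hj, ?_⟩
        have hj0 : e < s (j + 0) ^ 2 := by simpa using hj
        rw [sstep_up (j + 0) hj0]
        nlinarith [hj0, he1, sq_nonneg (s (j + 0) - 1)]
      | succ n ih =>
        obtain ⟨ih1, ih2⟩ := ih
        have hstep : s (j + n + 1) = s (j + n) ^ 2 := sstep_up (j + n) ih1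
        have heq : j + (n + 1) = j + n + 1 := rfl
        have h1 : e < s (j + (n + 1)) ^ 2 := by
          rw [heq, hstep]
          nlinarith [ih1, he1]
        refine ⟨h1, ?_⟩
        have hstep2 : s (j + (n + 1) + 1) = s (j + (n + 1)) ^ 2 :=
          sstep_up (j + (n + 1)) h1
        rw [hstep2]
        nlinarith [h1, he1, sq_nonneg (s (j + (n + 1)) - 1)]
    have hmono : StrictMono (fun k => s (j + k)) := by
      apply strictMono_nat_of_lt_succ
      intro n
      exact (key n).2
    have hlt : s (j + 0) < s (j + l) := hmono (by omega : (0:ℕ) < l)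
    rw [hper j] at hlt
    simp only [Nat.add_zero] at hlt
    exact lt_irrefl _ hlt
  -- claim 2 : exactly e
  have claim2 : ∀ i, s i ^ 2 = e := by
    intro i
    rcases lt_trichotomy (s i ^ 2) e with h | h | h
    · exfalso
      have hnext : s (i + 1) = e := sstep_low i h
      have h' := claim1 (i + 1)
      rw [hnext] at h'
      nlinarith [he1]
    · exact h
    · exact absurd h (not_lt.mpr (claim1 i))
  -- sign analysis : v is nonnegative
  have hvm : v (-1) = 1 ∨ v (-1) = -1 := mul_self_eq_one_iff.mp hneg1
  have hnn : ∀ x : K, 0 ≤ v x := by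
    intro x
    rcases hvm with hm | hm
    · by_contra hneg
      push_neg at hneg
      have h0 : v (x + (-x)) ≤ max (v x) (v (-x)) := hna x (-x)
      rw [add_neg_cancel, hv0, hvneg, hm, one_mul, max_self] at h0
      linarith
    · exfalso
      -- v(-1) = -1 is impossible: look at step 0 → 1
      have h0 : (v p) ^ 2 = e := claim2 0
      have h1 : s 1 ^ 2 = e := claim2 1
      have hs1 : s 1 = v (p ^ 2 + a) := hsucc 0
      have hge : e ≤ max (v (p ^ 2 + a)) (v (-(p ^ 2))) := by
        have h := hna (p ^ 2 + a) (-(p ^ 2))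
        have hkey : v ((p ^ 2 + a) + (-(p ^ 2))) = e := by
          rw [show (p ^ 2 + a) + (-(p ^ 2)) = a from by ring, ha]
        rwa [hkey] at h
      have hvp : v (-(p ^ 2)) = -e := by
        rw [hvneg, hm, hvsq, h0]; ring
      have hlt1 : v (p ^ 2 + a) < e := by
        have hq : v (p ^ 2 + a) ^ 2 = e := by rw [← hs1]; exact h1
        nlinarith [he1]
      rw [hvp] at hge
      rcases max_cases (v (p ^ 2 + a)) (-e) with ⟨hc, _⟩ | ⟨hc, _⟩
      · rw [hc] at hge; linarith
      · rw [hc] at hge; linarith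
  -- each orbit value equals exp(1/2)
  have hse : ∀ i, s i = Real.exp (1 / 2) := by
    intro i
    have h1 : s i = Real.sqrt e := by
      rw [← claim2 i, Real.sqrt_sq (hnn _)]
    have h2' : Real.exp (1 / 2) = Real.sqrt e := by
      have hsq : Real.exp (1 / 2) ^ 2 = e := by
        rw [sq, ← Real.exp_add, he]; norm_num
      rw [← hsq, Real.sqrt_sq (Real.exp_pos _).le]
    rw [h1, h2']
  -- conclude
  have hprod : ∀ i ∈ Finset.range l, v (2 * g^[i] p) = Real.exp (1 / 2) := by
    intro i _
    rw [hmul, h2, one_mul]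
    exact hse i
  calc ∏ i ∈ Finset.range l, v (2 * g^[i] p)
      = ∏ _i ∈ Finset.range l, Real.exp (1 / 2) := Finset.prod_congr rfl hprod
    _ = Real.exp (1 / 2) ^ l := by rw [Finset.prod_const, Finset.card_range]
    _ = Real.exp ((l : ℝ) / 2) := by
        rw [← Real.exp_nat_mul]
        congr 1
        ring
end
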